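/- arXiv:1909.06834 — 3 statements merged into one kernel-verified Lean document; each statement's English description precedes it below -/
import Mathlib

section
/- For any integer r ≥ 2 and any r-graph H on a finite vertex set V (with |V| divisible by r) having at least one perfect matching, log Φ(H) ≤ (1/r)·∑_{v∈V} h(v,H), where h(v,H) denotes the base-e Shannon entropy of the edge containing v in a uniformly random perfect matching of H. -/
/-!
Write `c A` for the number of perfect matchings containing the edge `A` and `N = Φ(H)`. Every
vertex lies in exactly one edge of each perfect matching, so the weights `c A / N` form a
fractional perfect matching. Removing the edge at a fixed vertex and inducting on the vertex set
shows that any fractional perfect matching `w` satisfies `∑_M ∏_{A ∈ M} w A ≤ 1`. Double counting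
gives `∑_v h(v,H) = r ∑_A negMulLog (c A / N)` and
`N ∑_A negMulLog (c A / N) = ∑_M log (∏_{A ∈ M} c A / N)⁻¹`, and by Jensen's inequality for `log`
over the `N` matchings the latter is at least `N log N`.
-/

open Finset

/-- The set of perfect matchings of the `r`-graph `H` on vertex set `V`. -/
def pmSet (V : Finset ℕ) (H : Finset (Finset ℕ)) : Finset (Finset (Finset ℕ)) :=
  H.powerset.filter (fun M => (∀ A ∈ M, ∀ B ∈ M, A ≠ B → A ∩ B = ∅) ∧ M.biUnion id = V)

/-- The number of perfect matchings of `H` (denoted `Φ(H)`). -/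
def pmCount (V : Finset ℕ) (H : Finset (Finset ℕ)) : ℕ := (pmSet V H).card

/-- `h(v,H)`: the base-`e` entropy of the edge containing `v` in a uniformly random
perfect matching of `H`.  The edge containing `v` equals `A` with probability
(number of perfect matchings containing `A`)/`Φ(H)`. -/
noncomputable def hEnt (V : Finset ℕ) (H : Finset (Finset ℕ)) (v : ℕ) : ℝ :=
  ∑ A ∈ H.filter (fun A => v ∈ A),
    Real.negMulLog ((((pmSet V H).filter (fun M => A ∈ M)).card : ℝ) / (pmCount V H : ℝ))

variable {V A : Finset ℕ} {H : Finset (Finset ℕ)} {M : Finset (Finset ℕ)}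

lemma mem_pmSet :
    M ∈ pmSet V H ↔ M ⊆ H ∧ (M : Set (Finset ℕ)).PairwiseDisjoint id ∧ M.biUnion id = V := by
  simp [pmSet, Set.PairwiseDisjoint, Set.Pairwise, disjoint_iff_inter_eq_empty]

lemma subset_of_mem_pmSet (hM : M ∈ pmSet V H) (hA : A ∈ M) : A ⊆ V :=
  (mem_pmSet.1 hM).2.2 ▸ subset_biUnion_of_mem id hA

lemma existsUnique_mem_of_mem_pmSet (hM : M ∈ pmSet V H) {v : ℕ} (hv : v ∈ V) :
    ∃! A, A ∈ M ∧ v ∈ A := by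
  obtain ⟨-, hdisj, rfl⟩ := mem_pmSet.1 hM
  obtain ⟨A, hA, hvA⟩ := mem_biUnion.1 hv
  refine ⟨A, ⟨hA, hvA⟩, fun B ⟨hB, hvB⟩ => ?_⟩
  by_contra hBA
  exact disjoint_left.1 (hdisj hB hA hBA) hvB hvA

lemma pmSet_empty (hH : ∅ ∉ H) : pmSet ∅ H = {∅} := by
  refine eq_singleton_iff_unique_mem.2 ⟨by simp [mem_pmSet], fun M hM => ?_⟩
  refine eq_empty_of_forall_notMem fun A hA => hH ?_
  rw [← subset_empty.1 (subset_of_mem_pmSet hM hA)]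
  exact (mem_pmSet.1 hM).1 hA

lemma sum_sum_filter_mem_pmSet {β : Type*} [AddCommMonoid β]
    (g : Finset ℕ → Finset (Finset ℕ) → β) :
    ∑ A ∈ H, ∑ M ∈ pmSet V H with A ∈ M, g A M = ∑ M ∈ pmSet V H, ∑ A ∈ M, g A M :=
  sum_comm' fun A M => by
    simp only [mem_filter]
    exact ⟨fun h => ⟨h.2.2, h.2.1⟩, fun h => ⟨(mem_pmSet.1 h.2).1 h.1, h.2, h.1⟩⟩

lemma sum_pmSet_eq_sum_sum_filter_mem {β : Type*} [AddCommMonoid β]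
    (f : Finset (Finset ℕ) → β) {v : ℕ} (hv : v ∈ V) :
    ∑ M ∈ pmSet V H, f M = ∑ A ∈ H with v ∈ A, ∑ M ∈ pmSet V H with A ∈ M, f M := by
  simp_rw [sum_filter (p := fun A => v ∈ A), ite_sum_zero]
  rw [sum_sum_filter_mem_pmSet (fun A M => if v ∈ A then f M else 0)]
  refine sum_congr rfl fun M hM => ?_
  obtain ⟨A, ⟨hAM, hvA⟩, huniq⟩ := existsUnique_mem_of_mem_pmSet hM hv
  rw [sum_eq_single_of_mem A hAM fun B hBM hBA => if_neg fun hvB => hBA (huniq B ⟨hBM, hvB⟩),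
    if_pos hvA]

lemma erase_mem_pmSet_sdiff (hM : M ∈ pmSet V H) (hA : A ∈ M) : M.erase A ∈ pmSet (V \ A) H := by
  obtain ⟨hMH, hdisj, hcover⟩ := mem_pmSet.1 hM
  have hdisjA : Disjoint A ((M.erase A).biUnion id) :=
    (disjoint_biUnion_right _ _ _).2 fun B hB =>
      hdisj hA (mem_of_mem_erase hB) (ne_of_mem_erase hB).symm
  refine mem_pmSet.2 ⟨(erase_subset A M).trans hMH, hdisj.subset (by simp), ?_⟩
  rw [← hcover, ← insert_erase hA, biUnion_insert, erase_insert (notMem_erase A M), id,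
    union_sdiff_left, sdiff_eq_self_of_disjoint hdisjA.symm]

lemma insert_mem_pmSet (hM : M ∈ pmSet (V \ A) H) (hAH : A ∈ H) (hAV : A ⊆ V) :
    insert A M ∈ pmSet V H := by
  obtain ⟨hMH, hdisj, hcover⟩ := mem_pmSet.1 hM
  refine mem_pmSet.2 ⟨insert_subset hAH hMH, ?_, ?_⟩
  · rw [coe_insert]
    refine hdisj.insert fun B hB _ => ?_
    exact disjoint_of_subset_right (subset_of_mem_pmSet hM hB) disjoint_sdiff
  · rw [biUnion_insert, hcover, id, union_sdiff_of_subset hAV]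

lemma notMem_of_mem_pmSet_sdiff (hM : M ∈ pmSet (V \ A) H) (hA : A.Nonempty) : A ∉ M := by
  intro hAM
  obtain ⟨v, hv⟩ := hA
  exact (mem_sdiff.1 (subset_of_mem_pmSet hM hAM hv)).2 hv

lemma sum_filter_mem_pmSet_prod {R : Type*} [CommSemiring R] (w : Finset ℕ → R)
    (hAH : A ∈ H) (hAV : A ⊆ V) (hA : A.Nonempty) :
    ∑ M ∈ pmSet V H with A ∈ M, ∏ B ∈ M, w B = w A * ∑ M ∈ pmSet (V \ A) H, ∏ B ∈ M, w B := by
  rw [mul_sum]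
  refine sum_nbij' (fun M => M.erase A) (insert A) (fun M hM => ?_) (fun M hM => ?_)
    (fun M hM => insert_erase (mem_filter.1 hM).2)
    (fun M hM => erase_insert (notMem_of_mem_pmSet_sdiff hM hA))
    (fun M hM => (mul_prod_erase M w (mem_filter.1 hM).2).symm)
  · exact erase_mem_pmSet_sdiff (mem_filter.1 hM).1 (mem_filter.1 hM).2
  · exact mem_filter.2 ⟨insert_mem_pmSet hM hAH hAV, mem_insert_self A M⟩

theorem sum_prod_pmSet_le_one {R : Type*} [CommSemiring R] [PartialOrder R] [IsOrderedRing R]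
    (hH : ∅ ∉ H) (w : Finset ℕ → R) (hw : ∀ A ∈ H, 0 ≤ w A)
    (hdeg : ∀ v ∈ V, ∑ A ∈ H with v ∈ A, w A ≤ 1) :
    ∑ M ∈ pmSet V H, ∏ A ∈ M, w A ≤ 1 := by
  induction V using Finset.strongInduction with
  | H V ih =>
  rcases V.eq_empty_or_nonempty with rfl | ⟨v, hv⟩
  · simp [pmSet_empty hH]
  rw [sum_pmSet_eq_sum_sum_filter_mem _ hv]
  refine (sum_le_sum fun A hA => ?_).trans (hdeg v hv)
  obtain ⟨hAH, -⟩ := mem_filter.1 hA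
  by_cases hAV : A ⊆ V
  · have hne : A.Nonempty := nonempty_iff_ne_empty.2 fun h => hH (h ▸ hAH)
    rw [sum_filter_mem_pmSet_prod w hAH hAV hne]
    exact mul_le_of_le_one_right (hw A hAH)
      (ih _ (sdiff_ssubset hAV hne) fun u hu => hdeg u (mem_sdiff.1 hu).1)
  · rw [filter_false_of_mem fun M hM hAM => hAV (subset_of_mem_pmSet hM hAM), sum_empty]
    exact hw A hAH

/-- Gibbs' inequality between the uniform distribution on `s` and the subprobability `y`. -/
lemma card_mul_log_card_le_sum_log_inv {ι : Type*} (s : Finset ι) (y : ι → ℝ)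
    (hy : ∀ i ∈ s, 0 < y i) (hsum : ∑ i ∈ s, y i ≤ 1) :
    #s * Real.log #s ≤ ∑ i ∈ s, Real.log (y i)⁻¹ := by
  rcases s.eq_empty_or_nonempty with rfl | hs
  · simp
  have hn : (0 : ℝ) < #s := by exact_mod_cast hs.card_pos
  have jensen := strictConcaveOn_log_Ioi.concaveOn.le_map_sum (t := s)
    (w := fun _ => (#s : ℝ)⁻¹) (p := y) (fun _ _ => by positivity) (by simp [hn.ne']) hy
  simp only [smul_eq_mul, ← mul_sum] at jensen
  have hmean : Real.log ((#s : ℝ)⁻¹ * ∑ i ∈ s, y i) ≤ -Real.log #s := by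
    rw [← Real.log_inv]
    exact Real.log_le_log (mul_pos (by positivity) (sum_pos hy hs))
      (mul_le_of_le_one_right (by positivity) hsum)
  have hsum_log : ∑ i ∈ s, Real.log (y i) ≤ #s * -Real.log #s :=
    (inv_mul_le_iff₀ hn).1 (jensen.trans hmean)
  simp only [Real.log_inv, sum_neg_distrib]
  linarith

lemma sum_sum_filter_mem_eq_smul_sum {β : Type*} [AddCommMonoid β] {r : ℕ}
    (hH : ∀ A ∈ H, A ⊆ V ∧ #A = r) (g : Finset ℕ → β) :
    ∑ v ∈ V, ∑ A ∈ H with v ∈ A, g A = r • ∑ A ∈ H, g A := by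
  rw [sum_comm' (t' := H) (s' := id) fun v A => ?_, smul_sum]
  · exact sum_congr rfl fun A hA => by rw [id, sum_const, (hH A hA).2]
  · simp only [mem_filter, id]
    exact ⟨fun h => ⟨h.2.2, h.2.1⟩, fun h => ⟨(hH A h.2).1 h.1, h.2, h.1⟩⟩

def pmCountContaining (V : Finset ℕ) (H : Finset (Finset ℕ)) (A : Finset ℕ) : ℕ :=
  #{M ∈ pmSet V H | A ∈ M}

lemma sum_pmCountContaining {v : ℕ} (hv : v ∈ V) :
    ∑ A ∈ H with v ∈ A, pmCountContaining V H A = pmCount V H := by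
  simp only [pmCountContaining, pmCount, card_eq_sum_ones]
  exact (sum_pmSet_eq_sum_sum_filter_mem _ hv).symm

lemma pmCountContaining_pos (hM : M ∈ pmSet V H) (hA : A ∈ M) : 0 < pmCountContaining V H A :=
  card_pos.2 ⟨M, mem_filter.2 ⟨hM, hA⟩⟩

lemma pmCount_mul_sum_negMulLog (hN : pmCount V H ≠ 0) :
    pmCount V H * ∑ A ∈ H, Real.negMulLog (pmCountContaining V H A / pmCount V H)
      = ∑ M ∈ pmSet V H,
          Real.log (∏ A ∈ M, (pmCountContaining V H A / pmCount V H : ℝ))⁻¹ := by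
  set N := pmCount V H
  set c := pmCountContaining V H
  calc N * ∑ A ∈ H, Real.negMulLog (c A / N)
      = ∑ A ∈ H, ∑ M ∈ pmSet V H with A ∈ M, Real.log (c A / N : ℝ)⁻¹ := by
        rw [mul_sum]
        refine sum_congr rfl fun A _ => ?_
        rw [sum_const, nsmul_eq_mul, Real.negMulLog, Real.log_inv]
        change (N : ℝ) * (-(c A / N) * _) = (c A : ℝ) * _
        field_simp
    _ = ∑ M ∈ pmSet V H, ∑ A ∈ M, Real.log (c A / N : ℝ)⁻¹ := sum_sum_filter_mem_pmSet _
    _ = ∑ M ∈ pmSet V H, Real.log (∏ A ∈ M, (c A / N : ℝ))⁻¹ := by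
        refine sum_congr rfl fun M hM => ?_
        rw [← prod_inv_distrib, Real.log_prod fun A hA => ?_]
        have := pmCountContaining_pos hM hA
        positivity

theorem shearer_pm_general (r : ℕ) (hr : 2 ≤ r) (V : Finset ℕ)
    (H : Finset (Finset ℕ)) (hH : ∀ A ∈ H, A ⊆ V ∧ A.card = r)
    (hpm : 0 < pmCount V H) :
    Real.log (pmCount V H) ≤ (1 / r) * ∑ v ∈ V, hEnt V H v := by
  have hN : (0 : ℝ) < pmCount V H := by exact_mod_cast hpm
  have hH₀ : ∅ ∉ H := fun h => by
    have := (hH ∅ h).2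
    simp only [card_empty] at this
    omega
  have hdeg : ∀ v ∈ V, ∑ A ∈ H with v ∈ A, (pmCountContaining V H A / pmCount V H : ℝ) ≤ 1 :=
    fun v hv => by
      rw [← sum_div, div_le_one hN]
      exact_mod_cast (sum_pmCountContaining hv).le
  have hgibbs := card_mul_log_card_le_sum_log_inv _ _
    (fun M hM => prod_pos fun A hA => div_pos (Nat.cast_pos.2 (pmCountContaining_pos hM hA)) hN)
    (sum_prod_pmSet_le_one hH₀ _ (fun A _ => by positivity) hdeg)
  rw [← pmCount_mul_sum_negMulLog hpm.ne'] at hgibbs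
  rw [show ∑ v ∈ V, hEnt V H v = r • _ from sum_sum_filter_mem_eq_smul_sum hH _, nsmul_eq_mul,
    one_div, inv_mul_cancel_left₀ (by positivity)]
  exact le_of_mul_le_mul_left hgibbs hN

/-- **Shearer's lemma for perfect matchings (Lemma 9).**
`log Φ(H) ≤ r⁻¹ ∑_{v ∈ V} h(v,H)`. -/
theorem shearer_pm (r : ℕ) (hr : 2 ≤ r) (V : Finset ℕ) (hV : r ∣ V.card)
    (H : Finset (Finset ℕ)) (hH : ∀ A ∈ H, A ⊆ V ∧ A.card = r)
    (hpm : 0 < pmCount V H) :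
    Real.log (pmCount V H) ≤ (1 / r) * ∑ v ∈ V, hEnt V H v :=
  shearer_pm_general r hr V H hH hpm
end

section
/- Let h : [0,1] → [0,1] be nondecreasing with h(x) → 0 as x → 0+, and let C > 0 and ε > 0. Then there exists δ > 0 such that for all positive integers n and l with l ≥ n, setting Δ = l/n, the following holds: if p_1,…,p_l ∈ [0,1] and γ_1,…,γ_l ∈ [0,1] satisfy ∑_{i=1}^l p_i = n, ∑_{i=1}^l p_i·log(1/p_i) ≥ n·log Δ − C·n (with the convention 0·log(1/0) = 0), and ∑_{i=1}^l γ_i ≤ δ·nΔ, then ∑_{i=1}^l p_i·h(γ_i) ≤ ε·n. -/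
open Finset

lemma aux_negMulLog_le_exp {x : ℝ} (hx : 0 ≤ x) : Real.negMulLog x ≤ Real.exp (-1) := by
  rcases eq_or_lt_of_le hx with rfl | hx
  · simpa using (Real.exp_pos (-1)).le
  · have h1 : 0 < 1 / (Real.exp 1 * x) := by positivity
    have h2 := Real.log_le_sub_one_of_pos h1
    rw [Real.log_div one_ne_zero (by positivity), Real.log_mul (Real.exp_ne_zero 1) hx.ne',
      Real.log_exp, Real.log_one] at h2
    have h3 : -Real.log x ≤ 1 / (Real.exp 1 * x) := by linarith
    have h4 : x * (-Real.log x) ≤ x * (1 / (Real.exp 1 * x)) :=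
      mul_le_mul_of_nonneg_left h3 hx.le
    have h5 : x * (1 / (Real.exp 1 * x)) = Real.exp (-1) := by
      rw [Real.exp_neg]
      field_simp
    rw [Real.negMulLog]
    nlinarith [h4, h5]

lemma aux_negMulLog_le {p c : ℝ} (hp : 0 ≤ p) (hc : 0 < c) :
    Real.negMulLog p ≤ -p * Real.log c + c * Real.exp (-1) := by
  rcases eq_or_lt_of_le hp with rfl | hp
  · simp
    positivity
  · have key : Real.negMulLog p = c * Real.negMulLog (p / c) - p * Real.log c := by
      rw [Real.negMulLog, Real.negMulLog, Real.log_div hp.ne' hc.ne']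
      field_simp
      ring
    have h1 : c * Real.negMulLog (p / c) ≤ c * Real.exp (-1) :=
      mul_le_mul_of_nonneg_left (aux_negMulLog_le_exp (by positivity)) hc.le
    rw [key]; linarith

/-- **Technical lemma (Lemma 10).** If `p_i ∈ [0,1]` sum to `n`, the entropy-type sum
`∑ p_i log(1/p_i)` is at least `n log Δ − C n` (where `Δ = l/n`), and `∑ γ_i ≤ δ·nΔ`,
then `∑ p_i h(γ_i) ≤ ε n` for any modulus `h`. -/
theorem small_weighted_sum (h : ℝ → ℝ) (hmono : MonotoneOn h (Set.Icc 0 1))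
    (hmaps : ∀ x ∈ Set.Icc (0 : ℝ) 1, h x ∈ Set.Icc (0 : ℝ) 1)
    (hlim : Filter.Tendsto h (nhdsWithin 0 (Set.Ioi 0)) (nhds 0))
    (C : ℝ) (hC : 0 < C) (ε : ℝ) (hε : 0 < ε) :
    ∃ δ : ℝ, 0 < δ ∧ ∀ n l : ℕ, 0 < n → n ≤ l →
      ∀ p γ : ℕ → ℝ,
        (∀ i ∈ Finset.range l, p i ∈ Set.Icc (0 : ℝ) 1) →
        (∀ i ∈ Finset.range l, γ i ∈ Set.Icc (0 : ℝ) 1) →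
        (∑ i ∈ Finset.range l, p i) = n →
        (n : ℝ) * Real.log ((l : ℝ) / n) - C * n ≤
          ∑ i ∈ Finset.range l, Real.negMulLog (p i) →
        (∑ i ∈ Finset.range l, γ i) ≤ δ * n * ((l : ℝ) / n) →
        (∑ i ∈ Finset.range l, p i * h (γ i)) ≤ ε * n := by
  -- choose threshold t
  have h1 : ∀ᶠ x in nhdsWithin (0:ℝ) (Set.Ioi 0), h x < ε / 2 :=
    hlim (Iio_mem_nhds (half_pos hε))
  have h2 : ∀ᶠ x in nhdsWithin (0:ℝ) (Set.Ioi 0), x ∈ Set.Ioo (0:ℝ) 1 :=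
    Ioo_mem_nhdsGT_of_mem ⟨le_refl 0, one_pos⟩
  obtain ⟨t, htε, ht0, ht1⟩ : ∃ t : ℝ, h t < ε / 2 ∧ 0 < t ∧ t < 1 := by
    obtain ⟨t, h1t, h2t⟩ := (h1.and h2).exists
    exact ⟨t, h1t, h2t.1, h2t.2⟩
  set K : ℝ := C + 2 with hK
  have hKpos : 0 < K := by positivity
  refine ⟨(ε * t / 2) * Real.exp (-((2 * K + 2) / ε)), by positivity, ?_⟩
  set δ : ℝ := (ε * t / 2) * Real.exp (-((2 * K + 2) / ε)) with hδdef
  have hδpos : 0 < δ := by positivity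
  intro n l hn hnl p γ hp hγ hsum hent hγsum
  set N : ℝ := (n : ℝ) with hNdef
  set L : ℝ := (l : ℝ) with hLdef
  have hNpos : 0 < N := Nat.cast_pos.mpr hn
  have hNL : N ≤ L := Nat.cast_le.mpr hnl
  have hLpos : 0 < L := lt_of_lt_of_le hNpos hNL
  have hγl : (∑ i ∈ Finset.range l, γ i) ≤ δ * L := by
    have : δ * N * (L / N) = δ * L := by field_simp
    linarith [hγsum, this.symm.le]
  set B : Finset ℕ := (Finset.range l).filter (fun i => t < γ i) with hBdef
  set Bc : Finset ℕ := (Finset.range l).filter (fun i => ¬ t < γ i) with hBcdef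
  have hBsub : B ⊆ Finset.range l := Finset.filter_subset _ _
  have hBcsub : Bc ⊆ Finset.range l := Finset.filter_subset _ _
  set m : ℝ := ∑ i ∈ B, p i with hmdef
  set m' : ℝ := ∑ i ∈ Bc, p i with hm'def
  have hmm' : m + m' = N := by
    rw [hmdef, hm'def, Finset.sum_filter_add_sum_filter_not, hsum]
  have hm0 : 0 ≤ m := Finset.sum_nonneg fun i hi => (hp i (hBsub hi)).1
  have hm'0 : 0 ≤ m' := Finset.sum_nonneg fun i hi => (hp i (hBcsub hi)).1
  have hmN : m ≤ N := by linarith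
  -- card bound
  set k : ℝ := (B.card : ℝ) with hkdef
  have hkt : k * t ≤ δ * L := by
    have h1 : B.card • t ≤ ∑ i ∈ B, γ i :=
      Finset.card_nsmul_le_sum B γ t (fun i hi => (le_of_lt (Finset.mem_filter.mp hi).2))
    have h2 : ∑ i ∈ B, γ i ≤ ∑ i ∈ Finset.range l, γ i :=
      Finset.sum_le_sum_of_subset_of_nonneg hBsub (fun i hi _ => (hγ i hi).1)
    rw [nsmul_eq_mul] at h1
    calc k * t ≤ ∑ i ∈ B, γ i := h1
    _ ≤ _ := h2
    _ ≤ δ * L := hγl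
  have hmk : m ≤ k := by
    have := Finset.sum_le_card_nsmul B p 1 (fun i hi => (hp i (hBsub hi)).2)
    rwa [nsmul_eq_mul, mul_one] at this
  -- key claim
  have key : m ≤ ε / 2 * N := by
    by_contra hcon
    push_neg at hcon
    have hmpos : 0 < m := lt_trans (by positivity) hcon
    have hkpos : 0 < k := lt_of_lt_of_le hmpos hmk
    -- entropy upper bound
    have hexp1 : Real.exp (-1) ≤ 1 := by
      rw [Real.exp_le_one_iff]; norm_num
    have hEB : ∑ i ∈ B, Real.negMulLog (p i) ≤ -m * Real.log (m / k) + N := by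
      have hs : ∀ i ∈ B, Real.negMulLog (p i) ≤
          -(p i) * Real.log (m / k) + (m / k) * Real.exp (-1) :=
        fun i hi => aux_negMulLog_le (hp i (hBsub hi)).1 (div_pos hmpos hkpos)
      calc ∑ i ∈ B, Real.negMulLog (p i)
          ≤ ∑ i ∈ B, (-(p i) * Real.log (m / k) + (m / k) * Real.exp (-1)) :=
            Finset.sum_le_sum hs
        _ = -m * Real.log (m / k) + k * ((m / k) * Real.exp (-1)) := by
            rw [Finset.sum_add_distrib, Finset.sum_const, nsmul_eq_mul, ← Finset.sum_mul]
            congr 1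
            · congr 1; rw [hmdef, ← Finset.sum_neg_distrib]
        _ ≤ -m * Real.log (m / k) + N := by
            have : k * ((m / k) * Real.exp (-1)) = m * Real.exp (-1) := by
              field_simp
            rw [this]
            have := mul_le_of_le_one_right hm0 hexp1
            linarith
    have hEBc : ∑ i ∈ Bc, Real.negMulLog (p i) ≤ m' * Real.log (L / N) + N := by
      have hs : ∀ i ∈ Bc, Real.negMulLog (p i) ≤
          -(p i) * Real.log (N / L) + (N / L) * Real.exp (-1) :=
        fun i hi => aux_negMulLog_le (hp i (hBcsub hi)).1 (div_pos hNpos hLpos)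
      have hlog : Real.log (N / L) = -Real.log (L / N) := by
        rw [← Real.log_inv, inv_div]
      calc ∑ i ∈ Bc, Real.negMulLog (p i)
          ≤ ∑ i ∈ Bc, (-(p i) * Real.log (N / L) + (N / L) * Real.exp (-1)) :=
            Finset.sum_le_sum hs
        _ = -m' * Real.log (N / L) + (Bc.card : ℝ) * ((N / L) * Real.exp (-1)) := by
            rw [Finset.sum_add_distrib, Finset.sum_const, nsmul_eq_mul, ← Finset.sum_mul]
            congr 1
            · congr 1; rw [hm'def, ← Finset.sum_neg_distrib]
        _ ≤ m' * Real.log (L / N) + N := by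
            rw [hlog]
            have hcard : (Bc.card : ℝ) ≤ L := by
              rw [hLdef]
              exact_mod_cast (Finset.card_le_card hBcsub).trans (Finset.card_range l).le
            have e1 : 0 ≤ (N / L) * Real.exp (-1) := by positivity
            have e2 : (N / L) * Real.exp (-1) ≤ N / L :=
              mul_le_of_le_one_right (div_pos hNpos hLpos).le hexp1
            have h1 : (Bc.card : ℝ) * ((N / L) * Real.exp (-1)) ≤ L * (N / L) :=
              mul_le_mul hcard e2 e1 hLpos.le
            have h2 : L * (N / L) = N := by field_simp
            linarith
    have hEtot : ∑ i ∈ Finset.range l, Real.negMulLog (p i) =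
        (∑ i ∈ B, Real.negMulLog (p i)) + ∑ i ∈ Bc, Real.negMulLog (p i) :=
      (Finset.sum_filter_add_sum_filter_not _ _ _).symm
    -- combine
    have hmain : m * Real.log (L / N) + m * Real.log (m / k) ≤ K * N := by
      have hent' := hent
      rw [hEtot] at hent'
      have hmm'' : m' = N - m := by linarith
      rw [hmm''] at hEBc
      rw [hK]
      linarith [hEB, hEBc, hent']
    have hlogsum : Real.log (L / N) + Real.log (m / k) = Real.log (L * m / (N * k)) := by
      rw [← Real.log_mul (div_pos hLpos hNpos).ne' (div_pos hmpos hkpos).ne', div_mul_div_comm]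
    have harg : Real.exp ((2 * K + 2) / ε) ≤ L * m / (N * k) := by
      have hδe : δ * Real.exp ((2 * K + 2) / ε) = ε * t / 2 := by
        rw [hδdef, mul_assoc, ← Real.exp_add, neg_add_cancel, Real.exp_zero, mul_one]
      rw [le_div_iff₀ (mul_pos hNpos hkpos)]
      have h6 : δ * (Real.exp ((2 * K + 2) / ε) * (N * k)) ≤ δ * (L * m) := by
        calc δ * (Real.exp ((2 * K + 2) / ε) * (N * k))
            = (δ * Real.exp ((2 * K + 2) / ε)) * (N * k) := by ring
          _ = (ε * t / 2) * (N * k) := by rw [hδe]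
          _ = (ε / 2 * N) * (k * t) := by ring
          _ ≤ m * (δ * L) := mul_le_mul hcon.le hkt (mul_nonneg hkpos.le ht0.le) hm0
          _ = δ * (L * m) := by ring
      exact le_of_mul_le_mul_left h6 hδpos
    have hloglb : (2 * K + 2) / ε ≤ Real.log (L * m / (N * k)) := by
      rw [Real.le_log_iff_exp_le (div_pos (mul_pos hLpos hmpos) (mul_pos hNpos hkpos))]
      exact harg
    have hfin : m * ((2 * K + 2) / ε) ≤ K * N := by
      calc m * ((2 * K + 2) / ε) ≤ m * Real.log (L * m / (N * k)) :=
            mul_le_mul_of_nonneg_left hloglb hm0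
        _ = m * (Real.log (L / N) + Real.log (m / k)) := by rw [hlogsum]
        _ = m * Real.log (L / N) + m * Real.log (m / k) := by ring
        _ ≤ K * N := hmain
    have : (K + 1) * N < m * ((2 * K + 2) / ε) := by
      have h1 : (ε / 2 * N) * ((2 * K + 2) / ε) = (K + 1) * N := by
        field_simp
      have h2 : 0 < (2 * K + 2) / ε := div_pos (by linarith) hε
      have h3 := mul_lt_mul_of_pos_right hcon h2
      linarith
    linarith [hfin, this, hNpos]
  -- final combination
  have hBsum : ∑ i ∈ B, p i * h (γ i) ≤ m := by
    rw [hmdef]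
    refine Finset.sum_le_sum fun i hi => ?_
    have hγi := hγ i (hBsub hi)
    exact mul_le_of_le_one_right (hp i (hBsub hi)).1 (hmaps (γ i) hγi).2
  have hBcsum : ∑ i ∈ Bc, p i * h (γ i) ≤ ε / 2 * N := by
    have step : ∀ i ∈ Bc, p i * h (γ i) ≤ p i * (ε / 2) := by
      intro i hi
      have hγi := hγ i (hBcsub hi)
      have hle : γ i ≤ t := not_lt.mp (Finset.mem_filter.mp hi).2
      have hht : h (γ i) ≤ h t := hmono hγi ⟨ht0.le, ht1.le⟩ hle
      have hpge := (hp i (hBcsub hi)).1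
      exact mul_le_mul_of_nonneg_left (by linarith) hpge
    calc ∑ i ∈ Bc, p i * h (γ i) ≤ ∑ i ∈ Bc, p i * (ε / 2) := Finset.sum_le_sum step
      _ = m' * (ε / 2) := by rw [hm'def, Finset.sum_mul]
      _ ≤ N * (ε / 2) := mul_le_mul_of_nonneg_right (by linarith) (half_pos hε).le
      _ = ε / 2 * N := by ring
  have htot : ∑ i ∈ Finset.range l, p i * h (γ i) =
      (∑ i ∈ B, p i * h (γ i)) + ∑ i ∈ Bc, p i * h (γ i) :=
    (Finset.sum_filter_add_sum_filter_not _ _ _).symm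
  rw [htot]
  linarith [hBsum, hBcsum, key]
end

section
/- Let b > 0, a ≥ 0, and let W be a random variable with 0 ≤ W ≤ b almost surely and E W ≤ a. Then for every θ ∈ [0, 1/(2b)], both E e^{θ(W − E W)} ≤ e^{θ²ab} and E e^{−θ(W − E W)} ≤ e^{θ²ab}. -/
open MeasureTheory

lemma exp_le_quad {x : ℝ} (hx : |x| ≤ 1) : Real.exp x ≤ 1 + x + x ^ 2 := by
  have h := Real.exp_bound hx (by norm_num : 0 < 3)
  have hs : (∑ i ∈ Finset.range 3, x ^ i / i.factorial) = 1 + x + x ^ 2 / 2 := by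
    simp [Finset.sum_range_succ, Nat.factorial]
  rw [hs] at h
  norm_num [Nat.factorial] at h
  have h3 : |x| ^ 3 ≤ x ^ 2 := by
    have h1 : |x| ^ 3 ≤ |x| ^ 2 := pow_le_pow_of_le_one (abs_nonneg x) hx (by norm_num)
    simpa [sq_abs] using h1
  have habs := (abs_le.mp h).2
  nlinarith

lemma mgf_aux {Ω : Type} [MeasurableSpace Ω] (μ : Measure Ω) [IsProbabilityMeasure μ]
    (b a : ℝ) (hb : 0 < b) (ha : 0 ≤ a) (W : Ω → ℝ) (hW : Measurable W)
    (hbound : ∀ᵐ ω ∂μ, W ω ∈ Set.Icc 0 b)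
    (hEW : (∫ ω, W ω ∂μ) ≤ a)
    (t : ℝ) (ht : |t| ≤ 1 / (2 * b)) :
    (∫ ω, Real.exp (t * (W ω - ∫ ω', W ω' ∂μ)) ∂μ) ≤ Real.exp (t ^ 2 * a * b) := by
  set m := ∫ ω', W ω' ∂μ with hm
  have hWint : Integrable W μ := by
    refine ⟨hW.aestronglyMeasurable, HasFiniteIntegral.of_bounded (C := b) ?_⟩
    filter_upwards [hbound] with ω hω
    rw [Real.norm_eq_abs, abs_le]
    exact ⟨by linarith [hω.1], hω.2⟩
  have hm0 : 0 ≤ m := by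
    apply integral_nonneg_of_ae
    filter_upwards [hbound] with ω hω using hω.1
  have hmb : m ≤ b := by
    have : (∫ ω', W ω' ∂μ) ≤ ∫ _, b ∂μ := by
      apply integral_mono_ae hWint (integrable_const b)
      filter_upwards [hbound] with ω hω using hω.2
    simpa using this
  have hma : m ≤ a := hEW
  have htb : |t| * b ≤ 1 / 2 := by
    have h2b : (0:ℝ) < 2 * b := by positivity
    have := (le_div_iff₀ h2b).mp ht
    nlinarith
  -- pointwise small
  have hsmall : ∀ᵐ ω ∂μ, |t * (W ω - m)| ≤ 1 := by
    filter_upwards [hbound] with ω hω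
    have h1 : |W ω - m| ≤ b := by
      rw [abs_le]; constructor <;> [linarith [hω.1]; linarith [hω.2]]
    calc |t * (W ω - m)| = |t| * |W ω - m| := abs_mul _ _
      _ ≤ |t| * b := mul_le_mul_of_nonneg_left h1 (abs_nonneg t)
      _ ≤ 1 / 2 := htb
      _ ≤ 1 := by norm_num
  -- RHS linear function
  set c1 : ℝ := t + t ^ 2 * (b - 2 * m) with hc1
  set c0 : ℝ := 1 - t * m + t ^ 2 * m ^ 2 with hc0
  have hRint : Integrable (fun ω => c1 * W ω + c0) μ :=
    (hWint.const_mul c1).add (integrable_const c0)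
  have hptwise : ∀ᵐ ω ∂μ, Real.exp (t * (W ω - m)) ≤ c1 * W ω + c0 := by
    filter_upwards [hbound, hsmall] with ω hω hsm
    have h1 := exp_le_quad hsm
    have hsq : W ω ^ 2 ≤ b * W ω := by nlinarith [hω.1, hω.2]
    have ht2 : (0:ℝ) ≤ t ^ 2 := sq_nonneg t
    calc Real.exp (t * (W ω - m)) ≤ 1 + t * (W ω - m) + (t * (W ω - m)) ^ 2 := h1
      _ = 1 + t * (W ω - m) + t ^ 2 * (W ω - m) ^ 2 := by ring
      _ ≤ 1 + t * (W ω - m) + t ^ 2 * (b * W ω - 2 * m * W ω + m ^ 2) := by nlinarith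
      _ = c1 * W ω + c0 := by rw [hc1, hc0]; ring
  have hEint : Integrable (fun ω => Real.exp (t * (W ω - m))) μ := by
    refine ⟨(((hW.sub measurable_const).const_mul t).exp).aestronglyMeasurable,
      HasFiniteIntegral.of_bounded (C := Real.exp 1) ?_⟩
    filter_upwards [hsmall] with ω hsm
    rw [Real.norm_eq_abs, Real.abs_exp]
    exact Real.exp_le_exp.mpr (le_trans (le_abs_self _) hsm)
  have hmono : (∫ ω, Real.exp (t * (W ω - m)) ∂μ) ≤ ∫ ω, c1 * W ω + c0 ∂μ :=
    integral_mono_ae hEint hRint hptwise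
  have hRval : (∫ ω, c1 * W ω + c0 ∂μ) = c1 * m + c0 := by
    rw [integral_add (hWint.const_mul c1) (integrable_const c0), integral_const_mul,
      integral_const]
    simp [hm]
  have hfinal : c1 * m + c0 ≤ Real.exp (t ^ 2 * a * b) := by
    have h1 : c1 * m + c0 = 1 + t ^ 2 * (b * m - m ^ 2) := by rw [hc1, hc0]; ring
    have h2 : t ^ 2 * (b * m - m ^ 2) ≤ t ^ 2 * a * b := by
      have ht2 : (0:ℝ) ≤ t ^ 2 := sq_nonneg t
      have h3 : b * m - m ^ 2 ≤ a * b := by nlinarith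
      calc t ^ 2 * (b * m - m ^ 2) ≤ t ^ 2 * (a * b) := mul_le_mul_of_nonneg_left h3 ht2
        _ = t ^ 2 * a * b := by ring
    calc c1 * m + c0 = 1 + t ^ 2 * (b * m - m ^ 2) := h1
      _ ≤ 1 + t ^ 2 * a * b := by linarith
      _ ≤ Real.exp (t ^ 2 * a * b) := by
          linarith [Real.add_one_le_exp (t ^ 2 * a * b)]
  linarith [hmono, hRval ▸ hmono]

/-- **Hoeffding-type bound (Proposition 14).** If `0 ≤ W ≤ b` a.s. and `E W ≤ a`,
then for every `θ ∈ [0, 1/(2b)]`,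
`E e^{θ(W−EW)} ≤ e^{θ²ab}` and `E e^{−θ(W−EW)} ≤ e^{θ²ab}`. -/
theorem mgf_bound {Ω : Type} [MeasurableSpace Ω] (μ : Measure Ω) [IsProbabilityMeasure μ]
    (b a : ℝ) (hb : 0 < b) (ha : 0 ≤ a) (W : Ω → ℝ) (hW : Measurable W)
    (hbound : ∀ᵐ ω ∂μ, W ω ∈ Set.Icc 0 b)
    (hEW : (∫ ω, W ω ∂μ) ≤ a)
    (θ : ℝ) (hθ0 : 0 ≤ θ) (hθb : θ ≤ 1 / (2 * b)) :
    (∫ ω, Real.exp (θ * (W ω - ∫ ω', W ω' ∂μ)) ∂μ) ≤ Real.exp (θ ^ 2 * a * b) ∧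
      (∫ ω, Real.exp (-θ * (W ω - ∫ ω', W ω' ∂μ)) ∂μ) ≤ Real.exp (θ ^ 2 * a * b) := by
  have h1 := mgf_aux μ b a hb ha W hW hbound hEW θ (by rwa [abs_of_nonneg hθ0])
  have h2 := mgf_aux μ b a hb ha W hW hbound hEW (-θ) (by rwa [abs_neg, abs_of_nonneg hθ0])
  refine ⟨h1, ?_⟩
  have : (-θ) ^ 2 = θ ^ 2 := by ring
  rwa [this] at h2
end
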